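/- arXiv:1912.13013 — 2 statements merged into one kernel-verified Lean document; each statement's English description precedes it below -/
import Mathlib

section
/- Let (X,d) be a geodesic metric space with path system PS, and suppose A ⊂ X is PS-contracting with constant C via a map π_A: X → A. Then for every x ∈ X and every closest-point projection p ∈ A (d(x,p) = d(x,A)), we have d(π_A(x), p) ≤ 2C. -/
open Set

variable {X : Type*} [MetricSpace X]

/-- `f` restricted to `[a,b]` is a `(K,C)`-quasigeodesic. -/
def IsQuasiGeodesicOn (K C : ℝ) (f : ℝ → X) (a b : ℝ) : Prop :=
  ∀ s ∈ Set.Icc a b, ∀ t ∈ Set.Icc a b,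
    |s - t| / K - C ≤ dist (f s) (f t) ∧ dist (f s) (f t) ≤ K * |s - t| + C

/-- `f` restricted to `[a,b]` is a geodesic. -/
def IsGeodesicOn (f : ℝ → X) (a b : ℝ) : Prop :=
  ∀ s ∈ Set.Icc a b, ∀ t ∈ Set.Icc a b, dist (f s) (f t) = |s - t|

/-- `(X,d)` is a geodesic metric space. -/
def IsGeodesicSpace (X : Type*) [MetricSpace X] : Prop :=
  ∀ x y : X, ∃ f : ℝ → X, f 0 = x ∧ f (dist x y) = y ∧ IsGeodesicOn f 0 (dist x y)

/-- A path system on `X` (Sisto): a family of `(K,C)`-quasigeodesic paths, closed under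
subpaths, connecting every pair of distinct points. `mem f a b` means the path
`f : [a,b] → X` belongs to the system. -/
structure PathSystem (X : Type*) [MetricSpace X] where
  K : ℝ
  C : ℝ
  one_le_K : 1 ≤ K
  C_nonneg : 0 ≤ C
  mem : (ℝ → X) → ℝ → ℝ → Prop
  quasi : ∀ f a b, mem f a b → IsQuasiGeodesicOn K C f a b
  subpath : ∀ f a b, mem f a b → ∀ a' b', a ≤ a' → a' ≤ b' → b' ≤ b → mem f a' b'
  connects : ∀ x y : X, x ≠ y → ∃ f a b, a ≤ b ∧ mem f a b ∧ f a = x ∧ f b = y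

/-- `A ⊆ X` is `PS`-contracting with constant `Cc` via the map `π` (Sisto):
points of `A` move at most `Cc` under `π`, and whenever `dist (π x) (π y) ≥ Cc`,
every path of `PS` from `x` to `y` passes within `Cc` of both `π x` and `π y`. -/
def PSContractingWith (PS : PathSystem X) (A : Set X) (Cc : ℝ) (π : X → X) : Prop :=
  (∀ x : X, π x ∈ A) ∧ (∀ x ∈ A, dist x (π x) ≤ Cc) ∧
    ∀ (f : ℝ → X) (a b : ℝ), a ≤ b → PS.mem f a b →
      Cc ≤ dist (π (f a)) (π (f b)) →
        (∃ t ∈ Set.Icc a b, dist (f t) (π (f a)) ≤ Cc) ∧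
        (∃ t ∈ Set.Icc a b, dist (f t) (π (f b)) ≤ Cc)

/-- `A ⊆ X` is `PS`-contracting. -/
def IsContractingSet (PS : PathSystem X) (A : Set X) : Prop :=
  ∃ Cc : ℝ, ∃ π : X → X, PSContractingWith PS A Cc π

/-- `g ∈ G` is a contracting element for `(X, PS)` (Sisto): `g` has infinite order,
some orbit `⟨g⟩x₀` is a quasigeodesic embedding of `ℤ`, and there is a `⟨g⟩`-invariant
`PS`-contracting subset containing `x₀` with cobounded `⟨g⟩` action. -/
def IsContractingElement {G : Type*} [Group G] [MulAction G X]
    (PS : PathSystem X) (g : G) : Prop :=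
  ∃ x₀ : X,
    (∀ n : ℤ, n ≠ 0 → g ^ n ≠ 1) ∧
    (∃ K C : ℝ, 1 ≤ K ∧ 0 ≤ C ∧ ∀ m n : ℤ,
      |(m : ℝ) - (n : ℝ)| / K - C ≤ dist ((g ^ m) • x₀) ((g ^ n) • x₀) ∧
        dist ((g ^ m) • x₀) ((g ^ n) • x₀) ≤ K * |(m : ℝ) - (n : ℝ)| + C) ∧
    ∃ A : Set X, x₀ ∈ A ∧ (∀ n : ℤ, ∀ y ∈ A, (g ^ n) • y ∈ A) ∧
      IsContractingSet PS A ∧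
      ∃ R : ℝ, ∀ y ∈ A, ∃ n : ℤ, dist y ((g ^ n) • x₀) ≤ R

/-! If `π x` and `π p` are `Cc`-close we conclude by the triangle inequality through `π p`.
Otherwise the geodesic from `x` to `p` passes through a point `q` within `Cc` of `π x`. Since `p`
is nearest to `x` in `A` and `q` lies on a geodesic from `x` to `p`, `p` is also at least as near
to `q` as `π x ∈ A` is, so `dist (π x) p ≤ 2 dist q (π x) ≤ 2 Cc`. -/

theorem IsGeodesicOn.dist_add_dist_eq {f : ℝ → X} {a b t : ℝ} (hf : IsGeodesicOn f a b)
    (ht : t ∈ Icc a b) : dist (f a) (f t) + dist (f t) (f b) = dist (f a) (f b) := by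
  have hab : a ≤ b := ht.1.trans ht.2
  rw [hf a (left_mem_Icc.2 hab) t ht, hf t ht b (right_mem_Icc.2 hab),
    hf a (left_mem_Icc.2 hab) b (right_mem_Icc.2 hab), abs_of_nonpos (by linarith [ht.1]),
    abs_of_nonpos (by linarith [ht.2]), abs_of_nonpos (by linarith)]
  ring

theorem dist_le_dist_of_dist_add_dist_eq {E : Type*} [PseudoMetricSpace E] {x q p z : E}
    (hq : dist x q + dist q p = dist x p) (hz : dist x p ≤ dist x z) :
    dist q p ≤ dist q z := by
  linarith [dist_triangle x q z]

namespace PSContractingWith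

variable {PS : PathSystem X} {A : Set X} {Cc : ℝ} {π : X → X}

theorem nonneg (h : PSContractingWith PS A Cc π) (x : X) : 0 ≤ Cc :=
  dist_nonneg.trans (h.2.1 (π x) (h.1 x))

theorem dist_le_two_mul_of_dist_le {x p : X} (h : PSContractingWith PS A Cc π) (hp : p ∈ A)
    (hxp : dist (π x) (π p) ≤ Cc) : dist (π x) p ≤ 2 * Cc := by
  linarith [dist_triangle (π x) (π p) p, dist_comm p (π p), h.2.1 p hp]

end PSContractingWith

/-- If `A ⊆ X` is `PS`-contracting with constant `C` via `π_A` for a geodesic path system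
`PS`, then for every `x ∈ X` and every closest point `p ∈ A` to `x`,
`dist (π_A x) p ≤ 2C`. -/
theorem projection_close_to_closest_point
    {X : Type*} [MetricSpace X] (PS : PathSystem X)
    (hgeodPS : ∀ f a b, PS.mem f a b → IsGeodesicOn f a b)
    (A : Set X) (Cc : ℝ) (π : X → X) (hcontr : PSContractingWith PS A Cc π)
    (x : X) (p : X) (hp : p ∈ A) (hclosest : dist x p = Metric.infDist x A) :
    dist (π x) p ≤ 2 * Cc := by
  rcases le_or_gt (dist (π x) (π p)) Cc with hnear | hfar
  · exact hcontr.dist_le_two_mul_of_dist_le hp hnear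
  have hxp : x ≠ p := by
    rintro rfl
    linarith [hcontr.nonneg x, dist_self (π x)]
  obtain ⟨f, a, b, hab, hf, rfl, rfl⟩ := PS.connects x p hxp
  obtain ⟨⟨t, ht, hft⟩, -⟩ := hcontr.2.2 f a b hab hf hfar.le
  have hnearest : dist (f a) (f b) ≤ dist (f a) (π (f a)) :=
    hclosest ▸ Metric.infDist_le_dist_of_mem (hcontr.1 _)
  have hclose : dist (f t) (f b) ≤ dist (f t) (π (f a)) :=
    dist_le_dist_of_dist_add_dist_eq ((hgeodPS f a b hf).dist_add_dist_eq ht) hnearest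
  calc dist (π (f a)) (f b) ≤ dist (f t) (π (f a)) + dist (f t) (f b) := by
        rw [dist_comm (f t)]; exact dist_triangle _ _ _
    _ ≤ 2 * Cc := by linarith
end

section
/- Let Ω be a properly convex domain, Γ ≤ Aut(Ω) discrete with Ω/Γ compact, and γ ∈ Γ an element with an axis (a,b). If x ∈ CH_Ω{a,v,b} for a fixed point v of γ in ∂Ω with [a,v]∪[v,b] ⊂ ∂Ω, then d_Ω(x, γx) = τ_Ω(γ); i.e., the convex hull of {a,v,b} in Ω lies in the minimal set Min(γ). -/
open Set Filter

abbrev Vd (d : ℕ) := Fin (d + 1) → ℝ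

/-- A properly convex domain `Ω ⊆ P(ℝ^{d+1})`, described by its open convex cone of lifts:
an open convex cone `C` whose closure contains no line through the origin. Points of the
closure of `Ω` are represented by nonzero vectors of the closure of `C`, and two vectors
represent the same point iff they lie on the same ray. -/
def IsProperConvexCone {d : ℕ} (C : Set (Vd d)) : Prop :=
  IsOpen C ∧ Convex ℝ C ∧ C.Nonempty ∧
    (∀ x ∈ C, ∀ t : ℝ, 0 < t → t • x ∈ C) ∧
    (closure C ∩ (-(closure C)) ⊆ {0})

/-- Lifts of the projective segment `[x,y]` between the points represented by `x` and `y`. -/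
def segCone {d : ℕ} (x y : Vd d) : Set (Vd d) :=
  {v | ∃ s t : ℝ, 0 ≤ s ∧ 0 ≤ t ∧ 0 < s + t ∧ v = s • x + t • y}

/-- Lifts of the open projective segment `(x,y)`. -/
def openSegCone {d : ℕ} (x y : Vd d) : Set (Vd d) :=
  {v | ∃ s t : ℝ, 0 < s ∧ 0 < t ∧ v = s • x + t • y}

/-- The Hilbert metric on `Ω`, computed on cone lifts:
`d([x],[y]) = log ( M(x/y) · M(y/x) )` where `M(x/y) = inf { t > 0 | t • y - x ∈ closure C }`.
This agrees with the cross-ratio definition of the Hilbert metric and is invariant under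
rescaling of the lifts. -/
noncomputable def coneDist {d : ℕ} (C : Set (Vd d)) (x y : Vd d) : ℝ :=
  Real.log (sInf {t : ℝ | 0 < t ∧ t • y - x ∈ closure C} *
    sInf {t : ℝ | 0 < t ∧ t • x - y ∈ closure C})

/-- `A ∈ GL(d+1, ℝ)` induces an automorphism of `Ω` iff its linear action preserves the cone. -/
def PreservesCone {d : ℕ} (C : Set (Vd d)) (A : Matrix (Fin (d + 1)) (Fin (d + 1)) ℝ) : Prop :=
  A.mulVec '' C = C

/-- The translation length `τ_Ω(g) = inf_{x ∈ Ω} d_Ω(x, g x)`. -/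
noncomputable def translationLength {d : ℕ} (C : Set (Vd d))
    (A : Matrix (Fin (d + 1)) (Fin (d + 1)) ℝ) : ℝ :=
  sInf ((fun x => coneDist C x (A.mulVec x)) '' C)

/-- `λ_max`: the largest modulus of a (complex) eigenvalue of `A`. -/
noncomputable def specMax {d : ℕ} (A : Matrix (Fin (d + 1)) (Fin (d + 1)) ℝ) : ℝ :=
  sSup ((fun z : ℂ => ‖z‖) '' spectrum ℂ (A.map Complex.ofReal))

/-- `λ_min`: the smallest modulus of a (complex) eigenvalue of `A`. -/
noncomputable def specMin {d : ℕ} (A : Matrix (Fin (d + 1)) (Fin (d + 1)) ℝ) : ℝ :=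
  sInf ((fun z : ℂ => ‖z‖) '' spectrum ℂ (A.map Complex.ofReal))

/-- Three pairwise distinct boundary points `x, y, z` form a half triangle if
`[x,z] ∪ [y,z] ⊆ ∂Ω` and `(x,y) ⊆ Ω`. -/
def IsHalfTriangle {d : ℕ} (C : Set (Vd d)) (x y z : Vd d) : Prop :=
  segCone x z ⊆ frontier C ∧ segCone y z ⊆ frontier C ∧ openSegCone x y ⊆ C

/-- The bi-infinite projective line `(x,y)` is contained in a half triangle in `∂Ω`. -/
def InHalfTriangle {d : ℕ} (C : Set (Vd d)) (x y : Vd d) : Prop :=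
  ∃ z ∈ frontier C, z ≠ 0 ∧ ¬ SameRay ℝ z x ∧ ¬ SameRay ℝ z y ∧ IsHalfTriangle C x y z

/-- `(x,y)` is an axis of the automorphism induced by `A`: an invariant bi-infinite
projective line that intersects `Ω`. -/
def IsAxis {d : ℕ} (C : Set (Vd d)) (A : Matrix (Fin (d + 1)) (Fin (d + 1)) ℝ)
    (x y : Vd d) : Prop :=
  x ∈ frontier C ∧ y ∈ frontier C ∧ x ≠ 0 ∧ y ≠ 0 ∧ ¬ SameRay ℝ x y ∧
    openSegCone x y ⊆ C ∧ A.mulVec '' segCone x y = segCone x y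

/-- A rank-one isometry: positive translation length, existence of an axis, and no axis
contained in a half triangle in `∂Ω`. -/
def IsRankOne {d : ℕ} (C : Set (Vd d)) (A : Matrix (Fin (d + 1)) (Fin (d + 1)) ℝ) : Prop :=
  0 < translationLength C A ∧ (∃ x y, IsAxis C A x y) ∧
    ∀ x y, IsAxis C A x y → ¬ InHalfTriangle C x y

namespace CHMinAux

/-- A real eigenvalue of a real matrix lies in the complex spectrum of its complexification. -/
lemma mem_spectrum_of_eigen {d : ℕ} (M : Matrix (Fin (d+1)) (Fin (d+1)) ℝ) (μ : ℝ) (w : Vd d)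
    (hw : w ≠ 0) (h : M.mulVec w = μ • w) :
    (μ : ℂ) ∈ spectrum ℂ (M.map Complex.ofReal) := by
  rw [spectrum.mem_iff]
  intro hu
  set Mc := M.map Complex.ofReal with hMc
  set wc : Fin (d+1) → ℂ := fun i => (w i : ℂ) with hwc
  have key : Mc.mulVec wc = (μ : ℂ) • wc := by
    funext i
    have h1 : Mc.mulVec wc i = ((M.mulVec w i : ℝ) : ℂ) := by
      simp only [Mc, wc, Matrix.mulVec, Matrix.map_apply, dotProduct]
      push_cast
      rfl
    rw [h1, h]
    simp [wc]
  have h0 : (algebraMap ℂ (Matrix (Fin (d+1)) (Fin (d+1)) ℂ) (μ:ℂ) - Mc).mulVec wc = 0 := by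
    rw [Algebra.algebraMap_eq_smul_one, Matrix.sub_mulVec, Matrix.smul_mulVec,
      Matrix.one_mulVec, key, sub_self]
  obtain ⟨u, hueq⟩ := hu
  have hz : wc = 0 := by
    calc wc = (1 : Matrix (Fin (d+1)) (Fin (d+1)) ℂ).mulVec wc := (Matrix.one_mulVec wc).symm
    _ = ((↑u⁻¹ * ↑u : Matrix (Fin (d+1)) (Fin (d+1)) ℂ)).mulVec wc := by rw [u.inv_mul]
    _ = (↑u⁻¹ : Matrix (Fin (d+1)) (Fin (d+1)) ℂ).mulVec ((↑u : Matrix (Fin (d+1)) (Fin (d+1)) ℂ).mulVec wc) := by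
        rw [Matrix.mulVec_mulVec]
    _ = 0 := by rw [hueq, h0, Matrix.mulVec_zero]
  apply hw
  funext i
  have := congrFun hz i
  simpa [wc] using this

/-- iteration lemma, form `t • Mx - x ∈ K`. -/
lemma iter_pow {d : ℕ} (M : Matrix (Fin (d+1)) (Fin (d+1)) ℝ) (K : Set (Vd d))
    (h0 : (0 : Vd d) ∈ K)
    (hadd : ∀ w₁ ∈ K, ∀ w₂ ∈ K, w₁ + w₂ ∈ K)
    (hMK : ∀ w ∈ K, M.mulVec w ∈ K)
    (hsm : ∀ c : ℝ, 0 < c → ∀ w ∈ K, c • w ∈ K)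
    (x : Vd d) (t : ℝ) (ht : 0 < t)
    (h : t • M.mulVec x - x ∈ K) :
    ∀ n : ℕ, t ^ n • (M ^ n).mulVec x - x ∈ K := by
  intro n
  induction n with
  | zero => simpa [Matrix.one_mulVec] using h0
  | succ n ih =>
    have h1 := hMK _ ih
    rw [Matrix.mulVec_sub, Matrix.mulVec_smul, Matrix.mulVec_mulVec, ← pow_succ'] at h1
    have h2 := hsm t ht _ h1
    rw [smul_sub, smul_smul, ← pow_succ'] at h2
    have h3 := hadd _ h2 _ h
    rwa [sub_add_sub_cancel] at h3

/-- iteration lemma, form `t • x - Mx ∈ K`. -/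
lemma iter_pow' {d : ℕ} (M : Matrix (Fin (d+1)) (Fin (d+1)) ℝ) (K : Set (Vd d))
    (h0 : (0 : Vd d) ∈ K)
    (hadd : ∀ w₁ ∈ K, ∀ w₂ ∈ K, w₁ + w₂ ∈ K)
    (hMK : ∀ w ∈ K, M.mulVec w ∈ K)
    (hsm : ∀ c : ℝ, 0 < c → ∀ w ∈ K, c • w ∈ K)
    (x : Vd d) (t : ℝ) (ht : 0 < t)
    (h : t • x - M.mulVec x ∈ K) :
    ∀ n : ℕ, t ^ n • x - (M ^ n).mulVec x ∈ K := by
  intro n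
  induction n with
  | zero => simpa [Matrix.one_mulVec] using h0
  | succ n ih =>
    have h1 := hMK _ ih
    rw [Matrix.mulVec_sub, Matrix.mulVec_smul, Matrix.mulVec_mulVec, ← pow_succ'] at h1
    have h2 := hsm (t ^ n) (pow_pos ht n) _ h
    rw [smul_sub, smul_smul, ← pow_succ] at h2
    have h3 := hadd _ h2 _ h1
    rwa [sub_add_sub_cancel] at h3

lemma pow_eigen {d : ℕ} (M : Matrix (Fin (d+1)) (Fin (d+1)) ℝ) (w : Vd d) (c : ℝ)
    (h : M.mulVec w = c • w) (n : ℕ) : (M ^ n).mulVec w = c ^ n • w := by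
  induction n with
  | zero => simp [Matrix.one_mulVec]
  | succ n ih =>
    rw [pow_succ', ← Matrix.mulVec_mulVec, ih, Matrix.mulVec_smul, h, smul_smul, ← pow_succ]

/-- limit obstruction: `q^n • y - w ∈ closure C` for all `n` with `q < 1` forces `w = 0`. -/
lemma limit_obstruction {d : ℕ} {C : Set (Vd d)}
    (hprop : closure C ∩ (-(closure C)) ⊆ {0})
    (y w : Vd d) (hwK : w ∈ closure C) (q : ℝ) (hq0 : 0 ≤ q) (hq1 : q < 1)
    (h : ∀ n : ℕ, q ^ n • y - w ∈ closure C) : w = 0 := by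
  have h1 : Tendsto (fun n : ℕ => q ^ n) atTop (nhds 0) :=
    tendsto_pow_atTop_nhds_zero_of_lt_one hq0 hq1
  have h2 : Tendsto (fun n : ℕ => q ^ n • y - w) atTop (nhds (-w)) := by
    have h3 := h1.smul_const y
    rw [zero_smul] at h3
    simpa using h3.sub_const w
  have hmem : -w ∈ closure C := isClosed_closure.mem_of_tendsto h2 (Eventually.of_forall h)
  have : w ∈ ({0} : Set (Vd d)) := hprop ⟨hwK, by rwa [Set.mem_neg]⟩
  simpa using this

lemma sub_small_mem {d : ℕ} {C : Set (Vd d)} (hCo : IsOpen C) {y : Vd d} (hy : y ∈ C) (z : Vd d) :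
    ∃ ε : ℝ, 0 < ε ∧ y - ε • z ∈ C := by
  obtain ⟨r, hr, hball⟩ := Metric.isOpen_iff.mp hCo y hy
  refine ⟨r / (2 * (‖z‖ + 1)), by positivity, hball ?_⟩
  rw [Metric.mem_ball, dist_eq_norm]
  have h1 : y - (r / (2 * (‖z‖ + 1))) • z - y = -((r / (2 * (‖z‖ + 1))) • z) := by abel
  rw [h1, norm_neg, norm_smul, Real.norm_eq_abs, abs_of_pos (by positivity)]
  rw [div_mul_eq_mul_div, div_lt_iff₀ (by positivity)]
  nlinarith [norm_nonneg z]

end CHMinAux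


/-- If `Γ ≤ Aut(Ω)` is discrete and cocompact, `γ ∈ Γ` has axis `(a,b)` (with `a`
attracting and `b` repelling), and `v` is a fixed point of `γ` in `∂Ω` with
`[a,v] ∪ [v,b] ⊆ ∂Ω`, then every `x ∈ CH_Ω{a,v,b}` satisfies `d_Ω(x, γx) = τ_Ω(γ)`;
i.e. the convex hull of `{a,v,b}` in `Ω` lies in `Min(γ)`. -/
theorem convex_hull_subset_min_set {d : ℕ} (C : Set (Vd d)) (hC : IsProperConvexCone C)
    (Γ : Subgroup (Matrix.GeneralLinearGroup (Fin (d + 1)) ℝ))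
    (hΓpres : ∀ g ∈ Γ, PreservesCone C (g : Matrix (Fin (d + 1)) (Fin (d + 1)) ℝ))
    (hdisc : DiscreteTopology Γ)
    (hcocpt : ∃ K : Set (Vd d), IsCompact K ∧ K ⊆ C ∧
      ∀ x ∈ C, ∃ g ∈ Γ, ∃ c : ℝ, 0 < c ∧
        c • (g : Matrix (Fin (d + 1)) (Fin (d + 1)) ℝ).mulVec x ∈ K)
    (γ : Matrix.GeneralLinearGroup (Fin (d + 1)) ℝ) (hγ : γ ∈ Γ)
    (a b : Vd d)
    (haxis : IsAxis C (γ : Matrix (Fin (d + 1)) (Fin (d + 1)) ℝ) a b)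
    (hatt : (γ : Matrix (Fin (d + 1)) (Fin (d + 1)) ℝ).mulVec a
      = specMax (γ : Matrix (Fin (d + 1)) (Fin (d + 1)) ℝ) • a)
    (hrep : (γ : Matrix (Fin (d + 1)) (Fin (d + 1)) ℝ).mulVec b
      = specMin (γ : Matrix (Fin (d + 1)) (Fin (d + 1)) ℝ) • b)
    (v : Vd d) (hv : v ∈ frontier C) (hv0 : v ≠ 0)
    (hvfix : ∃ μ : ℝ, (γ : Matrix (Fin (d + 1)) (Fin (d + 1)) ℝ).mulVec v = μ • v)
    (hav : segCone a v ⊆ frontier C) (hvb : segCone v b ⊆ frontier C) :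
    ∀ x ∈ C, (∃ s t u : ℝ, 0 ≤ s ∧ 0 ≤ t ∧ 0 ≤ u ∧ x = s • a + t • v + u • b) →
      coneDist C x ((γ : Matrix (Fin (d + 1)) (Fin (d + 1)) ℝ).mulVec x)
        = translationLength C (γ : Matrix (Fin (d + 1)) (Fin (d + 1)) ℝ) := by
  classical
  obtain ⟨μ, hμ⟩ := hvfix
  obtain ⟨hCo, hCc, hCne, hCcone, hCprop⟩ := hC
  set M : Matrix (Fin (d+1)) (Fin (d+1)) ℝ := (γ : Matrix (Fin (d+1)) (Fin (d+1)) ℝ) with hMdef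
  set N : Matrix (Fin (d+1)) (Fin (d+1)) ℝ :=
    ((γ⁻¹ : Matrix.GeneralLinearGroup (Fin (d+1)) ℝ) : Matrix (Fin (d+1)) (Fin (d+1)) ℝ) with hNdef
  have hNM : N * M = 1 := γ.inv_mul
  obtain ⟨ha_f, hb_f, ha0, hb0, -, -, -⟩ := haxis
  -- basic closure facts
  have h0K : (0 : Vd d) ∈ closure C := by
    obtain ⟨c₀, hc₀⟩ := hCne
    have ht : Tendsto (fun n : ℕ => (1 / ((n : ℝ) + 1)) • c₀) atTop (nhds 0) := by
      have h1 : Tendsto (fun n : ℕ => (1 / ((n : ℝ) + 1))) atTop (nhds 0) :=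
        tendsto_one_div_add_atTop_nhds_zero_nat
      simpa using h1.smul_const c₀
    refine mem_closure_of_tendsto ht (Eventually.of_forall fun n => ?_)
    exact hCcone c₀ hc₀ _ (by positivity)
  have hKsm : ∀ c : ℝ, 0 < c → ∀ w ∈ closure C, c • w ∈ closure C := by
    intro c hc w hw
    exact map_mem_closure (continuous_const_smul c) hw (fun z hz => hCcone z hz c hc)
  have hKsm0 : ∀ c : ℝ, 0 ≤ c → ∀ w ∈ closure C, c • w ∈ closure C := by
    intro c hc w hw
    rcases hc.eq_or_lt with h | h
    · simpa [← h] using h0K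
    · exact hKsm c h w hw
  have hKadd : ∀ w₁ ∈ closure C, ∀ w₂ ∈ closure C, w₁ + w₂ ∈ closure C := by
    intro w₁ h₁ w₂ h₂
    have hmid : (1/2 : ℝ) • w₁ + (1/2 : ℝ) • w₂ ∈ closure C :=
      hCc.closure h₁ h₂ (by norm_num) (by norm_num) (by norm_num)
    have h3 := hKsm 2 (by norm_num) _ hmid
    have he : (2:ℝ) • ((1/2:ℝ) • w₁ + (1/2:ℝ) • w₂) = w₁ + w₂ := by module
    rwa [he] at h3
  -- invariance facts
  have hPres : M.mulVec '' C = C := hΓpres γ hγ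
  have hMC : ∀ y ∈ C, M.mulVec y ∈ C := fun y hy => by
    rw [← hPres]; exact Set.mem_image_of_mem _ hy
  have hNC : ∀ y ∈ C, N.mulVec y ∈ C := by
    intro y hy
    rw [← hPres] at hy
    obtain ⟨z, hz, rfl⟩ := hy
    rwa [Matrix.mulVec_mulVec, hNM, Matrix.one_mulVec]
  have hMK : ∀ w ∈ closure C, M.mulVec w ∈ closure C := fun w hw =>
    map_mem_closure (Matrix.mulVecLin M).continuous_of_finiteDimensional hw hMC
  have hNK : ∀ w ∈ closure C, N.mulVec w ∈ closure C := fun w hw =>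
    map_mem_closure (Matrix.mulVecLin N).continuous_of_finiteDimensional hw hNC
  have hMnC : ∀ n : ℕ, ∀ y ∈ C, (M ^ n).mulVec y ∈ C := by
    intro n
    induction n with
    | zero => intro y hy; simpa [Matrix.one_mulVec] using hy
    | succ n ih =>
      intro y hy
      rw [pow_succ', ← Matrix.mulVec_mulVec]
      exact hMC _ (ih _ hy)
  have hNnC : ∀ n : ℕ, ∀ y ∈ C, (N ^ n).mulVec y ∈ C := by
    intro n
    induction n with
    | zero => intro y hy; simpa [Matrix.one_mulVec] using hy
    | succ n ih =>
      intro y hy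
      rw [pow_succ', ← Matrix.mulVec_mulVec]
      exact hNC _ (ih _ hy)
  have hNnK : ∀ n : ℕ, ∀ w ∈ closure C, (N ^ n).mulVec w ∈ closure C := by
    intro n
    induction n with
    | zero => intro w hw; simpa [Matrix.one_mulVec] using hw
    | succ n ih =>
      intro w hw
      rw [pow_succ', ← Matrix.mulVec_mulVec]
      exact hNK _ (ih _ hw)
  have hNMn : ∀ n : ℕ, (N ^ n) * (M ^ n) = 1 := by
    intro n
    induction n with
    | zero => simp
    | succ n ih =>
      rw [pow_succ, pow_succ', mul_assoc, ← mul_assoc N M (M ^ n), hNM, one_mul, ih]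
  -- eigenvalue positivity
  have haK : a ∈ closure C := frontier_subset_closure ha_f
  have hbK : b ∈ closure C := frontier_subset_closure hb_f
  have hvK : v ∈ closure C := frontier_subset_closure hv
  have hMainv : ∀ (w : Vd d) (c : ℝ), w ∈ closure C → w ≠ 0 → M.mulVec w = c • w → 0 < c := by
    intro w c hwK hw0 hwc
    rcases lt_trichotomy c 0 with h | h | h
    · exfalso
      have hcw : c • w ∈ closure C := by rw [← hwc]; exact hMK w hwK
      have h1 : (-c) • w ∈ closure C := hKsm (-c) (by linarith) w hwK
      have h2 : c • w ∈ -(closure C) := by rw [Set.mem_neg]; simpa [neg_smul] using h1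
      have h3 : c • w = 0 := by have := hCprop ⟨hcw, h2⟩; simpa using this
      rcases smul_eq_zero.mp h3 with h4 | h4
      · exact absurd h4 (ne_of_lt h)
      · exact hw0 h4
    · exfalso
      apply hw0
      have hx1 : N.mulVec (M.mulVec w) = w := by
        rw [Matrix.mulVec_mulVec, hNM, Matrix.one_mulVec]
      rw [hwc, h, zero_smul, Matrix.mulVec_zero] at hx1
      exact hx1.symm
    · exact h
  set lam := specMax M with hlamdef
  set mm := specMin M with hmmdef
  have hlam : 0 < lam := hMainv a lam haK ha0 hatt
  have hmm : 0 < mm := hMainv b mm hbK hb0 hrep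
  have hμ0 : 0 < μ := hMainv v μ hvK hv0 hμ
  have hmm_inv_pos : 0 < mm⁻¹ := inv_pos.mpr hmm
  -- spectral ordering  mm ≤ μ ≤ lam
  have hspec : (μ : ℂ) ∈ spectrum ℂ (M.map Complex.ofReal) :=
    CHMinAux.mem_spectrum_of_eigen M μ v hv0 hμ
  have hmemabs : ‖(μ:ℂ)‖ ∈ (fun z : ℂ => ‖z‖) '' spectrum ℂ (M.map Complex.ofReal) :=
    Set.mem_image_of_mem _ hspec
  have habs : ‖(μ:ℂ)‖ = μ := by simp [abs_of_pos hμ0]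
  have hμlam : μ ≤ lam := by
    have hrfl : lam = sSup ((fun z : ℂ => ‖z‖) '' spectrum ℂ (M.map Complex.ofReal)) := rfl
    rw [hrfl, ← habs]
    exact le_csSup ((M.map Complex.ofReal).finite_spectrum.image _).bddAbove hmemabs
  have hmmμ : mm ≤ μ := by
    have hrfl : mm = sInf ((fun z : ℂ => ‖z‖) '' spectrum ℂ (M.map Complex.ofReal)) := rfl
    rw [hrfl, ← habs]
    refine csInf_le ⟨0, fun r hr => ?_⟩ hmemabs
    obtain ⟨z, -, rfl⟩ := hr
    exact norm_nonneg z
  have hmmlam : mm ≤ lam := le_trans hmmμ hμlam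
  -- inverse eigenvector
  have hNb : N.mulVec b = mm⁻¹ • b := by
    have h1 : N.mulVec (M.mulVec b) = b := by
      rw [Matrix.mulVec_mulVec, hNM, Matrix.one_mulVec]
    rw [hrep, Matrix.mulVec_smul] at h1
    rw [eq_comm, inv_smul_eq_iff₀ hmm.ne']
    exact h1.symm
  -- key lower bounds
  have keyS1 : ∀ y ∈ C, ∀ t : ℝ, 0 < t → t • M.mulVec y - y ∈ closure C → mm⁻¹ ≤ t := by
    intro y hy t ht hmem
    obtain ⟨ε, hεpos, hyb⟩ := CHMinAux.sub_small_mem hCo hy b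
    have hiter := CHMinAux.iter_pow M (closure C) h0K hKadd hMK hKsm y t ht hmem
    have hNit : ∀ n : ℕ, t ^ n • y - (N ^ n).mulVec y ∈ closure C := by
      intro n
      have h4 := hNnK n _ (hiter n)
      rwa [Matrix.mulVec_sub, Matrix.mulVec_smul, Matrix.mulVec_mulVec, hNMn n,
        Matrix.one_mulVec] at h4
    have hcomb : ∀ n : ℕ, (t * mm) ^ n • y - ε • b ∈ closure C := by
      intro n
      have h4 : (N ^ n).mulVec (y - ε • b) ∈ closure C := subset_closure (hNnC n _ hyb)
      rw [Matrix.mulVec_sub, Matrix.mulVec_smul, CHMinAux.pow_eigen N b mm⁻¹ hNb n,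
        smul_smul] at h4
      have h5 := hKadd _ (hNit n) _ h4
      rw [sub_add_sub_cancel] at h5
      have h6 := hKsm (mm ^ n) (by positivity) _ h5
      have heq : (mm ^ n) • (t ^ n • y - (ε * (mm⁻¹) ^ n) • b) = (t * mm) ^ n • y - ε • b := by
        rw [smul_sub, smul_smul, smul_smul, mul_pow]
        congr 1
        · congr 1; ring
        · congr 1; rw [inv_pow]; field_simp
      rwa [heq] at h6
    by_contra hlt
    push_neg at hlt
    have hq1 : t * mm < 1 := by
      have h7 := mul_lt_mul_of_pos_right hlt hmm
      rwa [inv_mul_cancel₀ hmm.ne'] at h7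
    have h8 := CHMinAux.limit_obstruction hCprop y (ε • b) (hKsm ε hεpos b hbK)
      (t * mm) (by positivity) hq1 hcomb
    rcases smul_eq_zero.mp h8 with h9 | h9
    · exact absurd h9 hεpos.ne'
    · exact hb0 h9
  have keyS2 : ∀ y ∈ C, ∀ t : ℝ, 0 < t → t • y - M.mulVec y ∈ closure C → lam ≤ t := by
    intro y hy t ht hmem
    obtain ⟨ε, hεpos, hya⟩ := CHMinAux.sub_small_mem hCo hy a
    have hiter := CHMinAux.iter_pow' M (closure C) h0K hKadd hMK hKsm y t ht hmem
    have hcomb : ∀ n : ℕ, (t / lam) ^ n • y - ε • a ∈ closure C := by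
      intro n
      have h4 : (M ^ n).mulVec (y - ε • a) ∈ closure C := subset_closure (hMnC n _ hya)
      rw [Matrix.mulVec_sub, Matrix.mulVec_smul, CHMinAux.pow_eigen M a lam hatt n,
        smul_smul] at h4
      have h5 := hKadd _ (hiter n) _ h4
      rw [sub_add_sub_cancel] at h5
      have h6 := hKsm ((lam ^ n)⁻¹) (by positivity) _ h5
      have heq : (lam ^ n)⁻¹ • (t ^ n • y - (ε * lam ^ n) • a) = (t / lam) ^ n • y - ε • a := by
        rw [smul_sub, smul_smul, smul_smul, div_pow]
        congr 1
        · congr 1; field_simp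
        · congr 1; field_simp
      rwa [heq] at h6
    by_contra hlt
    push_neg at hlt
    have hq1 : t / lam < 1 := (div_lt_one hlam).mpr hlt
    have h8 := CHMinAux.limit_obstruction hCprop y (ε • a) (hKsm ε hεpos a haK)
      (t / lam) (by positivity) hq1 hcomb
    rcases smul_eq_zero.mp h8 with h9 | h9
    · exact absurd h9 hεpos.ne'
    · exact ha0 h9
  -- nonemptiness of the cross-ratio sets
  have hS1ne : ∀ y ∈ C, ∃ t : ℝ, 0 < t ∧ t • M.mulVec y - y ∈ closure C := by
    intro y hy
    obtain ⟨δ, hδpos, hmem⟩ := CHMinAux.sub_small_mem hCo (hMC y hy) y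
    refine ⟨δ⁻¹, inv_pos.mpr hδpos, ?_⟩
    have h1 := hCcone _ hmem δ⁻¹ (inv_pos.mpr hδpos)
    have heq : δ⁻¹ • (M.mulVec y - δ • y) = δ⁻¹ • M.mulVec y - y := by
      rw [smul_sub, smul_smul, inv_mul_cancel₀ hδpos.ne', one_smul]
    rw [heq] at h1
    exact subset_closure h1
  have hS2ne : ∀ y ∈ C, ∃ t : ℝ, 0 < t ∧ t • y - M.mulVec y ∈ closure C := by
    intro y hy
    obtain ⟨δ, hδpos, hmem⟩ := CHMinAux.sub_small_mem hCo hy (M.mulVec y)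
    refine ⟨δ⁻¹, inv_pos.mpr hδpos, ?_⟩
    have h1 := hCcone _ hmem δ⁻¹ (inv_pos.mpr hδpos)
    have heq : δ⁻¹ • (y - δ • M.mulVec y) = δ⁻¹ • y - M.mulVec y := by
      rw [smul_sub, smul_smul, inv_mul_cancel₀ hδpos.ne', one_smul]
    rw [heq] at h1
    exact subset_closure h1
  -- uniform lower bound for the displacement
  set L := Real.log (mm⁻¹ * lam) with hLdef
  have hge : ∀ y ∈ C, L ≤ coneDist C y (M.mulVec y) := by
    intro y hy
    have hne1 : {t : ℝ | 0 < t ∧ t • M.mulVec y - y ∈ closure C}.Nonempty := by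
      obtain ⟨t, ht1, ht2⟩ := hS1ne y hy; exact ⟨t, ht1, ht2⟩
    have hne2 : {t : ℝ | 0 < t ∧ t • y - M.mulVec y ∈ closure C}.Nonempty := by
      obtain ⟨t, ht1, ht2⟩ := hS2ne y hy; exact ⟨t, ht1, ht2⟩
    have hi1 : mm⁻¹ ≤ sInf {t : ℝ | 0 < t ∧ t • M.mulVec y - y ∈ closure C} :=
      le_csInf hne1 (fun t ht => keyS1 y hy t ht.1 ht.2)
    have hi2 : lam ≤ sInf {t : ℝ | 0 < t ∧ t • y - M.mulVec y ∈ closure C} :=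
      le_csInf hne2 (fun t ht => keyS2 y hy t ht.1 ht.2)
    have hp : mm⁻¹ * lam ≤ sInf {t : ℝ | 0 < t ∧ t • M.mulVec y - y ∈ closure C} *
        sInf {t : ℝ | 0 < t ∧ t • y - M.mulVec y ∈ closure C} :=
      mul_le_mul hi1 hi2 hlam.le (le_trans hmm_inv_pos.le hi1)
    exact Real.log_le_log (by positivity) hp
  -- the given point
  intro x hxC hx
  obtain ⟨s, tv, u, hs, htv, hu, hxeq⟩ := hx
  have hKcomb : ∀ α β δ : ℝ, 0 ≤ α → 0 ≤ β → 0 ≤ δ → α • a + β • v + δ • b ∈ closure C := by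
    intro α β δ hα hβ hδ
    exact hKadd _ (hKadd _ (hKsm0 α hα a haK) _ (hKsm0 β hβ v hvK)) _ (hKsm0 δ hδ b hbK)
  have hMx : M.mulVec x = (s * lam) • a + (tv * μ) • v + (u * mm) • b := by
    rw [hxeq, Matrix.mulVec_add, Matrix.mulVec_add, Matrix.mulVec_smul, Matrix.mulVec_smul,
      Matrix.mulVec_smul, hatt, hμ, hrep, smul_smul, smul_smul, smul_smul]
  have hmemS1 : mm⁻¹ • M.mulVec x - x ∈ closure C := by
    have heq : mm⁻¹ • M.mulVec x - x
        = (s * (mm⁻¹ * lam - 1)) • a + (tv * (mm⁻¹ * μ - 1)) • v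
          + (u * (mm⁻¹ * mm - 1)) • b := by
      rw [hMx, hxeq]; module
    rw [heq]
    apply hKcomb
    · apply mul_nonneg hs
      have h1 : mm⁻¹ * mm ≤ mm⁻¹ * lam := mul_le_mul_of_nonneg_left hmmlam hmm_inv_pos.le
      rw [inv_mul_cancel₀ hmm.ne'] at h1
      linarith
    · apply mul_nonneg htv
      have h1 : mm⁻¹ * mm ≤ mm⁻¹ * μ := mul_le_mul_of_nonneg_left hmmμ hmm_inv_pos.le
      rw [inv_mul_cancel₀ hmm.ne'] at h1
      linarith
    · rw [inv_mul_cancel₀ hmm.ne']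
      simp
  have hmemS2 : lam • x - M.mulVec x ∈ closure C := by
    have heq : lam • x - M.mulVec x
        = (s * (lam - lam)) • a + (tv * (lam - μ)) • v + (u * (lam - mm)) • b := by
      rw [hMx, hxeq]; module
    rw [heq]
    apply hKcomb
    · simp
    · exact mul_nonneg htv (by linarith)
    · exact mul_nonneg hu (by linarith)
  have hinf1 : sInf {t : ℝ | 0 < t ∧ t • M.mulVec x - x ∈ closure C} = mm⁻¹ := by
    apply le_antisymm
    · exact csInf_le ⟨mm⁻¹, fun t ht => keyS1 x hxC t ht.1 ht.2⟩ ⟨hmm_inv_pos, hmemS1⟩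
    · exact le_csInf ⟨mm⁻¹, hmm_inv_pos, hmemS1⟩ (fun t ht => keyS1 x hxC t ht.1 ht.2)
  have hinf2 : sInf {t : ℝ | 0 < t ∧ t • x - M.mulVec x ∈ closure C} = lam := by
    apply le_antisymm
    · exact csInf_le ⟨lam, fun t ht => keyS2 x hxC t ht.1 ht.2⟩ ⟨hlam, hmemS2⟩
    · exact le_csInf ⟨lam, hlam, hmemS2⟩ (fun t ht => keyS2 x hxC t ht.1 ht.2)
  have hcdx : coneDist C x (M.mulVec x) = L := by
    have hrfl : coneDist C x (M.mulVec x)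
        = Real.log (sInf {t : ℝ | 0 < t ∧ t • M.mulVec x - x ∈ closure C} *
            sInf {t : ℝ | 0 < t ∧ t • x - M.mulVec x ∈ closure C}) := rfl
    rw [hrfl, hinf1, hinf2, hLdef]
  have himg : L ∈ (fun y => coneDist C y (M.mulVec y)) '' C := ⟨x, hxC, hcdx⟩
  have htl : translationLength C M = L := by
    have hrfl : translationLength C M = sInf ((fun y => coneDist C y (M.mulVec y)) '' C) := rfl
    rw [hrfl]
    apply le_antisymm
    · refine csInf_le ⟨L, fun r hr => ?_⟩ himg
      obtain ⟨y, hy, rfl⟩ := hr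
      exact hge y hy
    · refine le_csInf ⟨L, himg⟩ (fun r hr => ?_)
      obtain ⟨y, hy, rfl⟩ := hr
      exact hge y hy
  rw [hcdx, htl]
end
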